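/- Let G be a Banach lattice and let S : c₀ → G be a linear bijection such that x ≤ y if and only if Sx ≤ Sy for all x, y ∈ c₀ (no continuity of S or S⁻¹ is assumed). Denote by (e_k) the unit vector basis of c₀. Then inf_k ‖S e_k‖ > 0. -/

import Mathlib

open Filter Topology ZeroAtInfty

namespace ZeroAtInftyContinuousMap

variable {α : Type*} [TopologicalSpace α]

/-- Pointwise supremum on `C₀(α, ℝ)`. -/
noncomputable instance : Max C₀(α, ℝ) where
  max f g :=
    { toFun := fun x => f x ⊔ g x
      continuous_toFun := (map_continuous f).sup (map_continuous g)
      zero_at_infty' := by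
        simpa using (zero_at_infty f).sup_nhds (zero_at_infty g) }

/-- Pointwise infimum on `C₀(α, ℝ)`. -/
noncomputable instance : Min C₀(α, ℝ) where
  min f g :=
    { toFun := fun x => f x ⊓ g x
      continuous_toFun := (map_continuous f).inf (map_continuous g)
      zero_at_infty' := by
        simpa using (zero_at_infty f).inf_nhds (zero_at_infty g) }

/-- `C₀(α, ℝ)` with the pointwise order is a lattice; in particular `c₀ = C₀(ℕ, ℝ)` is the
Banach lattice of real sequences converging to `0` with coordinatewise order. -/
noncomputable instance : Lattice C₀(α, ℝ) :=
  letI : LE C₀(α, ℝ) := ⟨fun f g => ⇑f ≤ ⇑g⟩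
  letI : LT C₀(α, ℝ) := ⟨fun f g => ⇑f < ⇑g⟩
  DFunLike.coe_injective.lattice _ Iff.rfl Iff.rfl (fun _ _ => rfl) (fun _ _ => rfl)

end ZeroAtInftyContinuousMap

/-- The unit vector basis `(eₙ)` of `c₀ = C₀(ℕ, ℝ)`. -/
noncomputable def c0unit (n : ℕ) : C₀(ℕ, ℝ) :=
  { toFun := fun m => if m = n then 1 else 0
    continuous_toFun := continuous_of_discreteTopology
    zero_at_infty' := by
      rw [cocompact_eq_atTop]
      refine tendsto_nhds_of_eventually_eq ?_
      filter_upwards [Filter.eventually_gt_atTop n] with m hm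
      exact if_neg (by omega) }

/-
If `‖S eₖ‖` had infimum `0`, one could pick indices `k₀ < k₁ < ⋯` with `‖S e_{kⱼ}‖ ≤ 2⁻ʲ`. The
series `∑ⱼ S e_{kⱼ}` then converges in `G`, and since its terms are positive its sum `g`
dominates every `S e_{kⱼ}`. As `S` is an order isomorphism, `S⁻¹ g ∈ c₀` dominates every `e_{kⱼ}`,
so `(S⁻¹ g)(kⱼ) ≥ 1` for all `j`, contradicting `S⁻¹ g → 0`.
-/

open Set

lemma frequently_lt_of_forall_exists_lt {u : ℕ → ℝ} (hpos : ∀ k, 0 < u k)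
    (h : ∀ c > 0, ∃ k, u k < c) {ε : ℝ} (hε : 0 < ε) : ∃ᶠ k in atTop, u k < ε := by
  refine frequently_atTop.2 fun N => ?_
  -- a `c` below `u 0, …, u (N - 1)` forces every `k` with `u k < c` to be at least `N`
  have hsmall : ∀ᶠ c in 𝓝[>] (0 : ℝ), c ≤ ε ∧ ∀ m ∈ Finset.range N, c ≤ u m :=
    nhdsWithin_le_nhds <| (eventually_le_nhds hε).and <|
      (eventually_all_finset _).2 fun m _ => eventually_le_nhds (hpos m)
  obtain ⟨c, ⟨hcε, hcu⟩, hc0⟩ := (hsmall.and self_mem_nhdsWithin).exists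
  obtain ⟨k, hk⟩ := h c hc0
  exact ⟨k, not_lt.1 fun hkN => (hcu k (Finset.mem_range.2 hkN)).not_gt hk, hk.trans_le hcε⟩

lemma exists_strictMono_le_geometric {u : ℕ → ℝ} (hpos : ∀ k, 0 < u k)
    (h : ∀ c > 0, ∃ k, u k < c) : ∃ φ : ℕ → ℕ, StrictMono φ ∧ ∀ j, u (φ j) ≤ (1 / 2) ^ j := by
  obtain ⟨φ, hφ, hlt⟩ := extraction_forall_of_frequently fun j =>
    frequently_lt_of_forall_exists_lt hpos h (by positivity : (0 : ℝ) < (1 / 2) ^ j)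
  exact ⟨φ, hφ, fun j => (hlt j).le⟩

lemma Summable.bddAbove_range_of_nonneg {α : Type*} [AddCommMonoid α] [PartialOrder α]
    [IsOrderedAddMonoid α] [TopologicalSpace α] [OrderClosedTopology α] {x : ℕ → α}
    (hx : Summable x) (hx0 : ∀ j, 0 ≤ x j) : BddAbove (range x) := by
  refine ⟨∑' j, x j, ?_⟩
  rintro _ ⟨j, rfl⟩
  exact hx.le_tsum j fun i _ => hx0 i

lemma c0unit_ne_zero (n : ℕ) : c0unit n ≠ 0 := fun h => by
  simpa [c0unit] using congr($h n)

lemma c0unit_nonneg (n : ℕ) : 0 ≤ c0unit n := fun m => by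
  show (0 : ℝ) ≤ if m = n then 1 else 0
  split <;> norm_num

lemma not_bddAbove_range_c0unit_comp {φ : ℕ → ℕ} (hφ : φ.Injective) :
    ¬ BddAbove (range (c0unit ∘ φ)) := by
  rintro ⟨f, hf⟩
  have hone : ∀ j, 1 ≤ f (φ j) := fun j => by
    simpa [c0unit] using hf ⟨j, rfl⟩ (φ j)
  have hzero : Tendsto (f ∘ φ) atTop (𝓝 0) :=
    (cocompact_eq_atTop (α := ℕ) ▸ zero_at_infty f).comp hφ.nat_tendsto_atTop
  exact absurd (ge_of_tendsto' hzero hone) (by norm_num)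

theorem stmt11_general (G : Type*) [NormedAddCommGroup G] [Lattice G] [HasSolidNorm G] [IsOrderedAddMonoid G]
    [NormedSpace ℝ G]
    [CompleteSpace G]
    (S : C₀(ℕ, ℝ) ≃ₗ[ℝ] G)
    (hord : ∀ f g : C₀(ℕ, ℝ), f ≤ g ↔ S f ≤ S g) :
    ∃ c > (0 : ℝ), ∀ k : ℕ, c ≤ ‖S (c0unit k)‖ := by
  let e : C₀(ℕ, ℝ) ≃o G := ⟨S.toEquiv, (hord _ _).symm⟩
  have hnonneg : ∀ k, 0 ≤ S (c0unit k) := fun k => by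
    simpa [e] using e.monotone (c0unit_nonneg k)
  have hpos : ∀ k, 0 < ‖S (c0unit k)‖ := fun k => norm_pos_iff.2 (by simpa using c0unit_ne_zero k)
  by_contra! hsmall
  obtain ⟨φ, hφ, hgeom⟩ := exists_strictMono_le_geometric hpos hsmall
  have hbdd : BddAbove (range fun j => S (c0unit (φ j))) :=
    (Summable.of_norm_bounded summable_geometric_two hgeom).bddAbove_range_of_nonneg
      fun j => hnonneg (φ j)
  refine not_bddAbove_range_c0unit_comp hφ.injective (e.bddAbove_image.1 ?_)
  rwa [← range_comp]

/-- Let `G` be a Banach lattice and `S : c₀ → G` a linear bijection which is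
an order isomorphism (no continuity assumed). Then `inf_k ‖S eₖ‖ > 0`, where `(eₖ)` is the
unit vector basis of `c₀`. -/
theorem stmt11 (G : Type*) [NormedAddCommGroup G] [Lattice G] [HasSolidNorm G] [IsOrderedAddMonoid G]
    [NormedSpace ℝ G] [PosSMulStrictMono ℝ G] [PosSMulReflectLT ℝ G]
    [CompleteSpace G]
    (S : C₀(ℕ, ℝ) ≃ₗ[ℝ] G)
    (hord : ∀ f g : C₀(ℕ, ℝ), f ≤ g ↔ S f ≤ S g) :
    ∃ c > (0 : ℝ), ∀ k : ℕ, c ≤ ‖S (c0unit k)‖ :=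
  stmt11_general G S hord
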